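/- Let κ be a Markov kernel from (Ω, 𝒢) to (S, 𝒮) and suppose that for every A ∈ 𝒮 and P-almost every ω, lim_n (1/n) Σ_{i≤n} 1{X_i(ω) ∈ A} = κ(ω, A), where (X_n) is an exchangeable sequence on (Ω, Σ, P) with 𝒢 ⊆ E_∞. Then for all m, all A_1,...,A_m ∈ 𝒮, and all E ∈ 𝒢: ∫_E ∏_{i=1}^m κ(ω, A_i) dP(ω) = P(E ∩ {X_1 ∈ A_1, ..., X_m ∈ A_m}). -/

import Mathlib

open MeasureTheory ProbabilityTheory Filter Finset Topology

/-- A sequence of random elements is exchangeable if every finite coordinate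
permutation leaves the joint distribution unchanged. -/
def Exchangeable {Ω S : Type*} {mΩ : MeasurableSpace Ω} [MeasurableSpace S]
    (P : Measure Ω) (X : ℕ → Ω → S) : Prop :=
  ∀ (n : ℕ) (σ : Equiv.Perm (Fin n)),
    P.map (fun ω (i : Fin n) => X i ω) = P.map (fun ω (i : Fin n) => X (σ i) ω)

/-- The exchangeable σ-algebra of the sequence: preimages under the whole sequence of
measurable sets of `ℕ → S` invariant under all finite permutations of coordinates. -/
def exchangeableSigma {Ω S : Type*} [MeasurableSpace S] (X : ℕ → Ω → S) :
    MeasurableSpace Ω :=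
  MeasurableSpace.generateFrom
    {B | ∃ A : Set (ℕ → S), MeasurableSet A ∧
      (∀ π : Equiv.Perm ℕ, (∃ N, ∀ m ≥ N, π m = m) →
        (fun s : ℕ → S => fun i => s (π i)) ⁻¹' A = A) ∧
      B = (fun ω i => X i ω) ⁻¹' A}

/-- The tail σ-algebra of the sequence. -/
def tailSigma {Ω S : Type*} [MeasurableSpace S] (X : ℕ → Ω → S) :
    MeasurableSpace Ω :=
  ⨅ n : ℕ, MeasurableSpace.comap (fun ω (k : ℕ) => X (n + k) ω) inferInstance

/-- The left-shift invariant σ-algebra of the sequence. -/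
def shiftInvariantSigma {Ω S : Type*} [MeasurableSpace S] (X : ℕ → Ω → S) :
    MeasurableSpace Ω :=
  MeasurableSpace.generateFrom
    {B | ∃ A : Set (ℕ → S), MeasurableSet A ∧
      (fun s : ℕ → S => fun i => s (i + 1)) ⁻¹' A = A ∧
      B = (fun ω i => X i ω) ⁻¹' A}

/-- `κ` is a regular conditional distribution of `X` given the sub-σ-algebra `𝒢`. -/
def IsRCD {Ω S : Type*} [MeasurableSpace S] {mΩ : MeasurableSpace Ω}
    (P : Measure Ω) (X : Ω → S) (𝒢 : MeasurableSpace Ω)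
    (κ : @Kernel Ω S 𝒢 _) : Prop :=
  ∀ B : Set S, MeasurableSet B →
    (fun ω => (κ ω B).toReal) =ᵐ[P]
      MeasureTheory.condExp 𝒢 P (fun ω => B.indicator (fun _ => (1 : ℝ)) (X ω))

/-- The sequence `X` is conditionally iid given `𝒢`, with kernel `κ`: the conditional
distribution of the sequence given `𝒢` is the infinite product kernel `κ^∞`, expressed
via its finite-dimensional distributions. -/
def CondIIDKernel {Ω S : Type*} [MeasurableSpace S] {mΩ : MeasurableSpace Ω}
    (P : Measure Ω) (X : ℕ → Ω → S) (𝒢 : MeasurableSpace Ω)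
    (κ : @Kernel Ω S 𝒢 _) : Prop :=
  ∀ (m : ℕ) (A : Fin m → Set S), (∀ i, MeasurableSet (A i)) →
    ∀ G : Set Ω, MeasurableSet[𝒢] G →
      P (G ∩ ⋂ i, {ω | X i ω ∈ A i}) = ∫⁻ ω in G, ∏ i, κ ω (A i) ∂P

/-- The sequence `X` is conditionally iid given `𝒢`. -/
def CondIID {Ω S : Type*} [MeasurableSpace S] {mΩ : MeasurableSpace Ω}
    (P : Measure Ω) (X : ℕ → Ω → S) (𝒢 : MeasurableSpace Ω) : Prop :=
  ∃ κ : @Kernel Ω S 𝒢 _, @IsMarkovKernel Ω S 𝒢 _ κ ∧ CondIIDKernel P X 𝒢 κ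

/-- `empAvg X B ω n` is the empirical measure `μ_{ω,n}(B)` of the set `B`. -/
noncomputable def empAvg {Ω S : Type*} (X : ℕ → Ω → S) (B : Set S) (ω : Ω) (n : ℕ) : ℝ :=
  (∑ i ∈ Finset.range n, B.indicator (fun _ => (1 : ℝ)) (X i ω)) / n

/-- A Borel measure is tight if compacts have measure arbitrarily close to full. -/
def IsTightMeasure {S : Type*} [TopologicalSpace S] [MeasurableSpace S]
    (μ : Measure S) : Prop :=
  ∀ ε : ℝ, 0 < ε → ∃ K : Set S, IsCompact K ∧ 1 - ENNReal.ofReal ε < μ K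

/-- `μ` is outer regular on compact sets. -/
def OuterRegularOnCompacts {S : Type*} [TopologicalSpace S] [MeasurableSpace S]
    (μ : Measure S) : Prop :=
  ∀ K : Set S, IsCompact K → μ K = ⨅ O ∈ {O : Set S | IsOpen O ∧ K ⊆ O}, μ O

/-- `μ` is a Radon measure: inner regular with respect to compact sets on Borel sets. -/
def IsRadon {S : Type*} [TopologicalSpace S] [MeasurableSpace S]
    (μ : Measure S) : Prop :=
  ∀ B : Set S, MeasurableSet B → μ B = ⨆ K ∈ {K : Set S | IsCompact K ∧ K ⊆ B}, μ K

/-!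
By dominated convergence, `∫_E ∏ᵢ κ(ω, Aᵢ) dP` is the limit of `∫_E ∏ᵢ empAvg X (A i) ω n dP`.
Expanding the product, the latter is the average over all tuples `p : Fin m → Fin n` of
`P(E ∩ {X_{p i} ∈ A i ∀ i})`. For an injective tuple this is `P(E ∩ {X_i ∈ A i ∀ i})`: some
permutation `π` of `ℕ` fixing all large indices sends `i` to `p i`, `E` is the preimage of a
`π`-invariant set, and exchangeability makes the law of the sequence `π`-invariant. Injective
tuples form a proportion `n (n - 1) ⋯ (n - m + 1) / n ^ m → 1` of all tuples.
-/

open scoped ENNReal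

namespace Equiv.Perm

lemma exists_apply_eq_of_injective_fin {m : ℕ} {j : Fin m → ℕ} (hj : Function.Injective j) :
    ∃ π : Perm ℕ, (∀ i : Fin m, π i = j i) ∧ ∃ N, ∀ k ≥ N, π k = k := by
  obtain ⟨N, hmN, hjN⟩ : ∃ N, m ≤ N ∧ ∀ i, j i < N :=
    ⟨m + univ.sup j + 1, by omega, fun i => by have := le_sup (f := j) (mem_univ i); omega⟩
  obtain ⟨σ, hσ⟩ := exists_extending_pair (Fin.castLE hmN) (fun i => (⟨j i, hjN i⟩ : Fin N))
    (Fin.castLE_injective hmN) fun a b hab => hj (Fin.mk.inj_iff.mp hab)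
  refine ⟨σ.extendDomain Fin.equivSubtype, fun i => ?_, N, fun k hk =>
    extendDomain_apply_not_subtype _ _ (by simpa using hk)⟩
  simpa [hσ] using extendDomain_apply_image σ Fin.equivSubtype (Fin.castLE hmN i)

lemma exists_perm_fin_val_eq {π : Perm ℕ} {N M : ℕ} (hπ : ∀ k ≥ N, π k = k) (hNM : N ≤ M) :
    ∃ σ : Perm (Fin M), ∀ k : Fin M, (σ k : ℕ) = π k := by
  have hlt (k : Fin M) : π k < M := by
    by_contra! h
    have := π.injective (hπ (π k) (hNM.trans h))
    omega
  have hinj : Function.Injective fun k : Fin M => (⟨π k, hlt k⟩ : Fin M) :=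
    fun a b hab => Fin.ext (π.injective (Fin.mk.inj_iff.mp hab))
  exact ⟨Equiv.ofBijective _ (Finite.injective_iff_bijective.mp hinj), fun k => rfl⟩

end Equiv.Perm

section Exchangeable

variable {Ω S : Type*} [mΩ : MeasurableSpace Ω] [MeasurableSpace S] {P : Measure Ω}
  [IsFiniteMeasure P] {X : ℕ → Ω → S}

lemma Exchangeable.map_comp_perm (hX : ∀ n, Measurable (X n)) (hexch : Exchangeable P X)
    {π : Equiv.Perm ℕ} {N : ℕ} (hπ : ∀ k ≥ N, π k = k) :
    P.map (fun ω i => X (π i) ω) = P.map (fun ω i => X i ω) := by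
  refine IsProjectiveLimit.unique (P := fun I => (P.map fun ω i => X i ω).map I.restrict)
    (fun I => ?_) fun I => rfl
  obtain ⟨M, hNM, hIM⟩ : ∃ M, N ≤ M ∧ ∀ i ∈ I, i < M :=
    ⟨N + I.sup id + 1, by omega, fun i hi => by have := le_sup (f := id) hi; simp at this; omega⟩
  obtain ⟨σ, hσ⟩ := Equiv.Perm.exists_perm_fin_val_eq hπ hNM
  let g : (Fin M → S) → (I → S) := fun y i => y ⟨i, hIM i i.2⟩
  have hg : Measurable g := measurable_pi_lambda _ fun i => measurable_pi_apply _
  have h₁ : I.restrict ∘ (fun ω i => X (π i) ω) = g ∘ fun ω (k : Fin M) => X (σ k) ω := by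
    ext ω i
    simp [g, hσ]
  have h₂ : I.restrict ∘ (fun ω i => X i ω) = g ∘ fun ω (k : Fin M) => X k ω := rfl
  have hrestr : Measurable (I.restrict : (ℕ → S) → I → S) := measurable_restrict _
  dsimp only
  rw [Measure.map_map hrestr (measurable_pi_lambda _ fun i => hX _),
    Measure.map_map hrestr (measurable_pi_lambda _ hX), h₁, h₂,
    ← Measure.map_map hg (measurable_pi_lambda _ fun i => hX _),
    ← Measure.map_map hg (measurable_pi_lambda _ fun i => hX _), hexch M σ]

end Exchangeable

section ExchangeableSigma

variable {Ω S : Type*} [MeasurableSpace S] {X : ℕ → Ω → S}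

lemma exists_eq_preimage_of_measurableSet_exchangeableSigma {E : Set Ω}
    (hE : MeasurableSet[exchangeableSigma X] E) :
    ∃ A : Set (ℕ → S), MeasurableSet A ∧
      (∀ π : Equiv.Perm ℕ, (∃ N, ∀ m ≥ N, π m = m) →
        (fun s : ℕ → S => fun i => s (π i)) ⁻¹' A = A) ∧
      E = (fun ω i => X i ω) ⁻¹' A := by
  induction hE with
  | basic u hu => exact hu
  | empty => exact ⟨∅, .empty, fun _ _ => rfl, rfl⟩
  | compl u _ ih =>
    obtain ⟨A, hA, hinv, rfl⟩ := ih
    exact ⟨Aᶜ, hA.compl, fun π hπ => by rw [Set.preimage_compl, hinv π hπ], rfl⟩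
  | iUnion f _ ih =>
    choose A hA hinv hrep using ih
    refine ⟨⋃ n, A n, .iUnion hA, fun π hπ => ?_, ?_⟩
    · simp only [Set.preimage_iUnion, hinv _ π hπ]
    · simp only [Set.preimage_iUnion, hrep]

variable [mΩ : MeasurableSpace Ω]

lemma exchangeableSigma_le (hX : ∀ n, Measurable (X n)) : exchangeableSigma X ≤ mΩ := by
  refine MeasurableSpace.generateFrom_le ?_
  rintro B ⟨A, hA, -, rfl⟩
  exact measurable_pi_lambda _ hX hA

lemma Exchangeable.measure_inter_iInter_comp_injective {P : Measure Ω} [IsFiniteMeasure P]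
    (hX : ∀ n, Measurable (X n)) (hexch : Exchangeable P X) {E : Set Ω}
    (hE : MeasurableSet[exchangeableSigma X] E) {m : ℕ} {B : Fin m → Set S}
    (hB : ∀ i, MeasurableSet (B i)) {j : Fin m → ℕ} (hj : Function.Injective j) :
    P (E ∩ ⋂ i, {ω | X (j i) ω ∈ B i}) = P (E ∩ ⋂ i, {ω | X i ω ∈ B i}) := by
  obtain ⟨A, hA, hAinv, rfl⟩ := exists_eq_preimage_of_measurableSet_exchangeableSigma hE
  obtain ⟨π, hπj, N, hπ⟩ := Equiv.Perm.exists_apply_eq_of_injective_fin hj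
  set C : Set (ℕ → S) := A ∩ ⋂ i : Fin m, {x | x i ∈ B i}
  have hC : MeasurableSet C := hA.inter (.iInter fun i => measurable_pi_apply _ (hB i))
  have h₁ : (fun ω i => X (π i) ω) ⁻¹' C =
      (fun ω i => X i ω) ⁻¹' A ∩ ⋂ i, {ω | X (j i) ω ∈ B i} := by
    conv_rhs => rw [← hAinv π ⟨N, hπ⟩]
    simp only [C, Set.preimage_inter, Set.preimage_iInter, ← hπj]
    rfl
  have h₂ : (fun ω i => X i ω) ⁻¹' C = (fun ω i => X i ω) ⁻¹' A ∩ ⋂ i, {ω | X i ω ∈ B i} := by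
    simp only [C, Set.preimage_inter, Set.preimage_iInter]
    rfl
  rw [← h₁, ← h₂, ← Measure.map_apply (measurable_pi_lambda _ fun i => hX _) hC,
    ← Measure.map_apply (measurable_pi_lambda _ hX) hC, hexch.map_comp_perm hX hπ]

end ExchangeableSigma

section Counting

open Classical in
lemma card_filter_injective_fin (m n : ℕ) :
    #{p : Fin m → Fin n | Function.Injective p} = n.descFactorial m := by
  rw [← Fintype.card_subtype, Fintype.card_congr (Equiv.subtypeInjectiveEquivEmbedding _ _),
    Fintype.card_embedding_eq, Fintype.card_fin, Fintype.card_fin]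

lemma tendsto_descFactorial_div_pow (m : ℕ) :
    Tendsto (fun n : ℕ => (n.descFactorial m : ℝ) / n ^ m) atTop (𝓝 1) :=
  (Asymptotics.isEquivalent_iff_tendsto_one
    (eventually_ge_atTop 1 |>.mono fun n hn => by positivity)).mp
    (isEquivalent_descFactorial m)

lemma tendsto_sum_div_pow_of_eq_of_injective {m : ℕ} (f : ∀ n, (Fin m → Fin n) → ℝ) {c : ℝ}
    (hf : ∀ n p, |f n p - c| ≤ 1) (hinj : ∀ n p, Function.Injective p → f n p = c) :
    Tendsto (fun n : ℕ => (∑ p, f n p) / n ^ m) atTop (𝓝 c) := by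
  classical
  have hbound (n : ℕ) (hn : 1 ≤ n) :
      ‖(∑ p, f n p) / n ^ m - c‖ ≤ 1 - (n.descFactorial m : ℝ) / n ^ m := by
    have hpos : (0 : ℝ) < n ^ m := by positivity
    have hsum : |∑ p, (f n p - c)| ≤ n ^ m - n.descFactorial m := calc
      |∑ p, (f n p - c)| ≤ ∑ p, |f n p - c| := abs_sum_le_sum_abs _ _
      _ ≤ ∑ p : Fin m → Fin n, (1 - if Function.Injective p then 1 else 0) :=
        sum_le_sum fun p _ => by
          split_ifs with h
          · simp [hinj n p h]
          · simpa using hf n p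
      _ = n ^ m - n.descFactorial m := by
        rw [sum_sub_distrib, sum_boole, card_filter_injective_fin]
        simp
    have hcenter : (∑ p, f n p) / n ^ m - c = (∑ p, (f n p - c)) / n ^ m := by
      rw [sum_sub_distrib, sum_const, card_univ, Fintype.card_fun, Fintype.card_fin,
        Fintype.card_fin, nsmul_eq_mul]
      push_cast
      field_simp
    rw [Real.norm_eq_abs, hcenter, abs_div, abs_of_pos hpos, one_sub_div hpos.ne']
    exact div_le_div_of_nonneg_right hsum hpos.le
  rw [tendsto_iff_norm_sub_tendsto_zero]
  refine squeeze_zero' (.of_forall fun _ => norm_nonneg _)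
    ((eventually_ge_atTop 1).mono hbound) ?_
  simpa using (tendsto_descFactorial_div_pow m).const_sub 1

end Counting

section EmpiricalAverage

variable {Ω S : Type*} {X : ℕ → Ω → S}

lemma empAvg_mem_Icc (B : Set S) (ω : Ω) (n : ℕ) : empAvg X B ω n ∈ Set.Icc 0 1 := by
  refine ⟨div_nonneg (sum_nonneg fun i _ => Set.indicator_nonneg (fun _ _ => zero_le_one) _)
    n.cast_nonneg, div_le_one_of_le₀ ?_ n.cast_nonneg⟩
  calc ∑ i ∈ range n, B.indicator (fun _ => (1 : ℝ)) (X i ω)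
      ≤ ∑ i ∈ range n, (1 : ℝ) := sum_le_sum fun i _ => Set.indicator_le_self' (by simp) _
    _ = n := by simp

lemma prod_empAvg {m : ℕ} (A : Fin m → Set S) (ω : Ω) (n : ℕ) :
    ∏ i, empAvg X (A i) ω n =
      (∑ p : Fin m → Fin n, (⋂ i, {ω | X (p i) ω ∈ A i}).indicator 1 ω) / n ^ m := by
  simp only [empAvg, prod_div_distrib, prod_const, card_univ, Fintype.card_fin,
    ← Fin.sum_univ_eq_sum_range, Fintype.prod_sum]
  congr 1
  refine sum_congr rfl fun p _ => ?_
  by_cases h : ω ∈ ⋂ i, {ω | X (p i) ω ∈ A i}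
  · rw [Set.indicator_of_mem h]
    exact prod_eq_one fun i _ => Set.indicator_of_mem (s := A i) (Set.mem_iInter.mp h i) _
  · obtain ⟨i, hi⟩ := not_forall.mp (Set.mem_iInter.not.mp h)
    rw [Set.indicator_of_notMem h]
    exact prod_eq_zero (mem_univ i) (Set.indicator_of_notMem (s := A i) hi _)

variable [MeasurableSpace Ω] [MeasurableSpace S]

lemma measurable_empAvg (hX : ∀ n, Measurable (X n)) {B : Set S} (hB : MeasurableSet B) (n : ℕ) :
    Measurable fun ω => empAvg X B ω n :=
  (measurable_sum _ fun i _ => (measurable_const.indicator hB).comp (hX i)).div_const _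

lemma setIntegral_prod_empAvg {P : Measure Ω} [IsFiniteMeasure P] (hX : ∀ n, Measurable (X n))
    {m : ℕ} {A : Fin m → Set S} (hA : ∀ i, MeasurableSet (A i)) (E : Set Ω) (n : ℕ) :
    ∫ ω in E, ∏ i, empAvg X (A i) ω n ∂P =
      (∑ p : Fin m → Fin n, P.real (E ∩ ⋂ i, {ω | X (p i) ω ∈ A i})) / n ^ m := by
  have hmeas (p : Fin m → Fin n) : MeasurableSet (⋂ i, {ω | X (p i) ω ∈ A i}) :=
    .iInter fun i => hX _ (hA i)
  simp_rw [prod_empAvg, integral_div]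
  rw [integral_finsetSum _ fun p _ => (integrable_const 1).indicator (hmeas p)]
  simp_rw [integral_indicator_one (hmeas _), measureReal_restrict_apply (hmeas _), Set.inter_comm]

end EmpiricalAverage

lemma lintegral_eq_ofReal_integral_toReal {Ω : Type*} [MeasurableSpace Ω] {μ : Measure Ω}
    [IsFiniteMeasure μ] {f : Ω → ℝ≥0∞} (hf : AEMeasurable f μ) (hf_le : ∀ ω, f ω ≤ 1) :
    ∫⁻ ω, f ω ∂μ = ENNReal.ofReal (∫ ω, (f ω).toReal ∂μ) := by
  have hfin : ∫⁻ ω, f ω ∂μ ≠ ⊤ :=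
    ne_top_of_le_ne_top (measure_ne_top μ Set.univ) (by simpa using lintegral_mono hf_le)
  rw [integral_toReal hf (.of_forall fun ω => (hf_le ω).trans_lt ENNReal.one_lt_top),
    ENNReal.ofReal_toReal hfin]

section ExchangeableLimit

variable {Ω S : Type*} [mΩ : MeasurableSpace Ω] [MeasurableSpace S] {P : Measure Ω}
  [IsProbabilityMeasure P] {X : ℕ → Ω → S} {m : ℕ} {A : Fin m → Set S} {E : Set Ω}

lemma Exchangeable.tendsto_setIntegral_prod_empAvg (hX : ∀ n, Measurable (X n))
    (hexch : Exchangeable P X) (hA : ∀ i, MeasurableSet (A i))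
    (hE : MeasurableSet[exchangeableSigma X] E) :
    Tendsto (fun n => ∫ ω in E, ∏ i, empAvg X (A i) ω n ∂P) atTop
      (𝓝 (P.real (E ∩ ⋂ i, {ω | X i ω ∈ A i}))) := by
  simp_rw [setIntegral_prod_empAvg hX hA]
  refine tendsto_sum_div_pow_of_eq_of_injective _ (fun n p => ?_) fun n p hp => ?_
  · exact abs_sub_le_of_nonneg_of_le measureReal_nonneg measureReal_le_one measureReal_nonneg
      measureReal_le_one
  · exact congrArg ENNReal.toReal
      (hexch.measure_inter_iInter_comp_injective hX hE hA (Fin.val_injective.comp hp))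

lemma Exchangeable.setIntegral_prod_eq_measureReal (hX : ∀ n, Measurable (X n))
    (hexch : Exchangeable P X) (hA : ∀ i, MeasurableSet (A i))
    (hE : MeasurableSet[exchangeableSigma X] E) {f : Fin m → Ω → ℝ}
    (hf : ∀ i, ∀ᵐ ω ∂P, Tendsto (empAvg X (A i) ω) atTop (𝓝 (f i ω))) :
    ∫ ω in E, ∏ i, f i ω ∂P = P.real (E ∩ ⋂ i, {ω | X i ω ∈ A i}) := by
  have hprod : ∀ᵐ ω ∂P, Tendsto (fun n => ∏ i, empAvg X (A i) ω n) atTop (𝓝 (∏ i, f i ω)) := by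
    filter_upwards [ae_all_iff.mpr hf] with ω hω
    exact tendsto_finsetProd _ fun i _ => hω i
  have hdom : Tendsto (fun n => ∫ ω in E, ∏ i, empAvg X (A i) ω n ∂P) atTop
      (𝓝 (∫ ω in E, ∏ i, f i ω ∂P)) := by
    refine tendsto_integral_of_dominated_convergence (fun _ => 1)
      (fun n => (measurable_prod _ fun i _ => measurable_empAvg hX (hA i) n).aestronglyMeasurable)
      (integrable_const 1) (fun n => .of_forall fun ω => ?_) (ae_restrict_of_ae hprod)
    rw [Real.norm_eq_abs, abs_of_nonneg (prod_nonneg fun i _ => (empAvg_mem_Icc _ ω n).1)]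
    exact prod_le_one (fun i _ => (empAvg_mem_Icc _ ω n).1) fun i _ => (empAvg_mem_Icc _ ω n).2
  exact tendsto_nhds_unique hdom (hexch.tendsto_setIntegral_prod_empAvg hX hA hE)

lemma Exchangeable.lintegral_prod_eq_measure (hX : ∀ n, Measurable (X n))
    (hexch : Exchangeable P X) (hA : ∀ i, MeasurableSet (A i))
    (hE : MeasurableSet[exchangeableSigma X] E) {F : Fin m → Ω → ℝ≥0∞}
    (hF : ∀ i, Measurable (F i)) (hF_le : ∀ i ω, F i ω ≤ 1)
    (hconv : ∀ i, ∀ᵐ ω ∂P, Tendsto (empAvg X (A i) ω) atTop (𝓝 (F i ω).toReal)) :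
    ∫⁻ ω in E, ∏ i, F i ω ∂P = P (E ∩ ⋂ i, {ω | X i ω ∈ A i}) := by
  rw [lintegral_eq_ofReal_integral_toReal (measurable_prod _ fun i _ => hF i).aemeasurable
      fun ω => prod_le_one' fun i _ => hF_le i ω,
    ← ofReal_measureReal, ← hexch.setIntegral_prod_eq_measureReal hX hA hE hconv]
  simp_rw [ENNReal.toReal_prod]

end ExchangeableLimit

/-- If the empirical measures converge a.s. to `κ(·, A)` for every measurable `A`,
where `𝒢 ⊆ E∞`, then `κ^∞` reproduces the finite-dimensional distributions of the
exchangeable sequence on sets of `𝒢`. -/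
theorem stmt15 {Ω S : Type*} [mΩ : MeasurableSpace Ω] [MeasurableSpace S]
    (P : Measure Ω) [IsProbabilityMeasure P] (X : ℕ → Ω → S) (hX : ∀ n, Measurable (X n))
    (hexch : Exchangeable P X) (𝒢 : MeasurableSpace Ω) (h𝒢 : 𝒢 ≤ exchangeableSigma X)
    (κ : @Kernel Ω S 𝒢 _) (hκ : @IsMarkovKernel Ω S 𝒢 _ κ)
    (hconv : ∀ A : Set S, MeasurableSet A →
      ∀ᵐ ω ∂P, Filter.Tendsto (fun n => empAvg X A ω n) Filter.atTop (𝓝 ((κ ω A).toReal))) :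
    ∀ (m : ℕ) (A : Fin m → Set S), (∀ i, MeasurableSet (A i)) →
      ∀ E : Set Ω, MeasurableSet[𝒢] E →
        ∫⁻ ω in E, ∏ i, κ ω (A i) ∂P = P (E ∩ ⋂ i, {ω | X i ω ∈ A i}) := by
  intro m A hA E hE
  -- `𝒢` is a local instance on `Ω` too, so the ambient σ-algebra `mΩ` must be passed by name.
  refine hexch.lintegral_prod_eq_measure (mΩ := mΩ) hX hA (h𝒢 E hE) (fun i => ?_) (fun i ω => ?_)
    fun i => hconv (A i) (hA i)
  · exact (κ.measurable_coe (hA i)).mono (h𝒢.trans (exchangeableSigma_le (mΩ := mΩ) hX)) le_rfl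
  · have := hκ.isProbabilityMeasure ω
    exact prob_le_one
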